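/- arXiv:1510.08441 — 4 statements merged into one kernel-verified Lean document; each statement's English description precedes it below -/
import Mathlib

section
/- Let H be a real Hilbert space, C a nonempty closed convex subset of H, and f : C × C → ℝ a bifunction satisfying: f(x, x) = 0 for all x ∈ C; f is monotone on C, i.e., f(x, y) + f(y, x) ≤ 0 for all x, y ∈ C; f is weakly sequentially continuous on C × C, i.e., if x_n ⇀ x and y_n ⇀ y with all terms and limits in C, then f(x_n, y_n) → f(x, y); and f(x, ·) is convex on C for every x ∈ C. Then the solution set EP(f, C) = {x* ∈ C : f(x*, y) ≥ 0 for all y ∈ C} is a closed and convex subset of C. -/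
open scoped RealInnerProductSpace
open Filter

/-- Under reflexivity (`f(x,x) = 0`), monotonicity, weak sequential continuity and
convexity of `f(x,·)`, the solution set `EP(f,C) = {x* ∈ C | f(x*,y) ≥ 0 ∀ y ∈ C}`
of the equilibrium problem is a closed and convex subset of `C`. -/
theorem EP_set_isClosed_convex
    {H : Type*} [NormedAddCommGroup H] [InnerProductSpace ℝ H]
    (C : Set H) (hCne : C.Nonempty) (hCclosed : IsClosed C) (hCconv : Convex ℝ C)
    (f : H → H → ℝ)
    (hrefl : ∀ x ∈ C, f x x = 0)
    (hmono : ∀ x ∈ C, ∀ y ∈ C, f x y + f y x ≤ 0)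
    (hwcont : ∀ (x y : ℕ → H) (p q : H), (∀ n, x n ∈ C) → (∀ n, y n ∈ C) →
      p ∈ C → q ∈ C →
      (∀ w : H, Tendsto (fun n => ⟪x n, w⟫) atTop (nhds ⟪p, w⟫)) →
      (∀ w : H, Tendsto (fun n => ⟪y n, w⟫) atTop (nhds ⟪q, w⟫)) →
      Tendsto (fun n => f (x n) (y n)) atTop (nhds (f p q)))
    (hconv : ∀ x ∈ C, ConvexOn ℝ C (f x)) :
    IsClosed {x ∈ C | ∀ y ∈ C, 0 ≤ f x y} ∧
      Convex ℝ {x ∈ C | ∀ y ∈ C, 0 ≤ f x y} ∧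
      {x ∈ C | ∀ y ∈ C, 0 ≤ f x y} ⊆ C := by
  -- continuity of x ↦ f x y along strongly convergent sequences in C
  have hcont : ∀ (z : ℕ → H) (p y : H), (∀ n, z n ∈ C) → p ∈ C → y ∈ C →
      Tendsto z atTop (nhds p) → Tendsto (fun n => f (z n) y) atTop (nhds (f p y)) := by
    intro z p y hz hp hy hzp
    exact hwcont z (fun _ => y) p y hz (fun _ => hy) hp hy
      (fun w => hzp.inner tendsto_const_nhds)
      (fun w => tendsto_const_nhds)
  -- closedness
  have hclosed : IsClosed {x ∈ C | ∀ y ∈ C, 0 ≤ f x y} := by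
    apply IsSeqClosed.isClosed
    intro x p hx hxp
    have hpC : p ∈ C := hCclosed.isSeqClosed (fun n => (hx n).1) hxp
    refine ⟨hpC, fun y hy => ?_⟩
    exact ge_of_tendsto' (hcont x p y (fun n => (hx n).1) hpC hy hxp)
      (fun n => (hx n).2 y hy)
  -- the Minty dual set
  have hSM : {x ∈ C | ∀ y ∈ C, 0 ≤ f x y} = {x ∈ C | ∀ y ∈ C, f y x ≤ 0} := by
    ext x
    constructor
    · rintro ⟨hxC, hx⟩
      exact ⟨hxC, fun y hy => by have := hmono x hxC y hy; linarith [hx y hy]⟩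
    · rintro ⟨hxC, hx⟩
      refine ⟨hxC, fun y hy => ?_⟩
      set t : ℕ → ℝ := fun n => 1 / (n + 1) with ht_def
      set z : ℕ → H := fun n => (1 - t n) • x + t n • y with hz_def
      have ht0 : ∀ n, 0 < t n := fun n => by positivity
      have ht1 : ∀ n, t n ≤ 1 := by
        intro n
        rw [ht_def]
        rw [div_le_one (by positivity)]
        push_cast; linarith [Nat.cast_nonneg (α := ℝ) n]
      have hzC : ∀ n, z n ∈ C := fun n =>
        hCconv hxC hy (by linarith [ht1 n]) (le_of_lt (ht0 n)) (by ring)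
      have hfz : ∀ n, 0 ≤ f (z n) y := by
        intro n
        have h1 : f (z n) ((1 - t n) • x + t n • y) ≤
            (1 - t n) * f (z n) x + t n * f (z n) y :=
          (hconv (z n) (hzC n)).2 hxC hy (by linarith [ht1 n]) (le_of_lt (ht0 n)) (by ring)
        have hzz : f (z n) (z n) = 0 := hrefl _ (hzC n)
        have hzx : f (z n) x ≤ 0 := hx (z n) (hzC n)
        have h2 : (1 - t n) * f (z n) x ≤ 0 :=
          mul_nonpos_of_nonneg_of_nonpos (by linarith [ht1 n]) hzx
        have h3 : 0 ≤ t n * f (z n) y := by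
          have : f (z n) (z n) = f (z n) ((1 - t n) • x + t n • y) := by rw [hz_def]
          linarith [this ▸ hzz]
        exact nonneg_of_mul_nonneg_right h3 (ht0 n)
      have hzlim : Tendsto z atTop (nhds x) := by
        have ht : Tendsto t atTop (nhds 0) := tendsto_one_div_add_atTop_nhds_zero_nat
        have h := (((tendsto_const_nhds : Tendsto (fun _ : ℕ => (1:ℝ)) atTop (nhds 1)).sub ht).smul_const x).add (ht.smul_const y)
        simpa using h
      exact ge_of_tendsto' (hcont z x y hzC hxC hy hzlim) hfz
  refine ⟨hclosed, ?_, fun x hx => hx.1⟩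
  rw [hSM]
  intro x1 hx1 x2 hx2 a b ha hb hab
  refine ⟨hCconv hx1.1 hx2.1 ha hb hab, fun y hy => ?_⟩
  have h := (hconv y hy).2 hx1.1 hx2.1 ha hb hab
  simp only [smul_eq_mul] at h
  have h1 : a * f y x1 ≤ 0 := mul_nonpos_of_nonneg_of_nonpos ha (hx1.2 y hy)
  have h2 : b * f y x2 ≤ 0 := mul_nonpos_of_nonneg_of_nonpos hb (hx2.2 y hy)
  linarith
end

section
/- Let H be a real Hilbert space and C a nonempty closed convex subset of H. Let f : C × C → ℝ satisfy: f(x, x) = 0 and f(x, y) + f(y, x) ≤ 0 for all x, y ∈ C (monotonicity); f is Lipschitz-type continuous on C with constants c₁, c₂ > 0, i.e., f(x, y) + f(y, z) ≥ f(x, z) − c₁‖x − y‖² − c₂‖y − z‖² for all x, y, z ∈ C; and f(x, ·) is convex and subdifferentiable on C for every x ∈ C. Let λ > 0 and k > 0, let x_{n−1}, x_n ∈ H and y_{n−1}, y_n ∈ C, and let y_{n+1} ∈ C be a minimizer over C of y ↦ λ f(y_n, y) + (1/2)‖x_n − y‖², where y_n is itself a minimizer over C of y ↦ λ f(y_{n−1},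 y) + (1/2)‖x_{n−1} − y‖². Then for every x* ∈ C with f(x*, y) ≥ 0 for all y ∈ C, one has ‖y_{n+1} − x*‖² ≤ ‖x_n − x*‖² + k‖x_n − x_{n−1}‖² + 2λc₁‖y_{n−1} − y_n‖² − (1 − 1/k − 2λc₂)‖y_n − y_{n+1}‖². -/
open scoped RealInnerProductSpace

lemma min_variational_aux {H : Type*} [NormedAddCommGroup H] [InnerProductSpace ℝ H]
    {C : Set H} (hCconv : Convex ℝ C)
    (g : H → ℝ) (hg : ConvexOn ℝ C g) (lam : ℝ) (hlam : 0 < lam)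
    (x p : H) (hp : p ∈ C)
    (hmin : ∀ y ∈ C, lam * g p + (1 / 2) * ‖x - p‖ ^ 2 ≤
      lam * g y + (1 / 2) * ‖x - y‖ ^ 2)
    {y : H} (hy : y ∈ C) :
    ⟪x - p, y - p⟫ ≤ lam * (g y - g p) := by
  set a : ℝ := ⟪x - p, y - p⟫ - lam * (g y - g p) with ha
  set c : ℝ := (1 / 2) * ‖y - p‖ ^ 2 with hc
  have hc0 : 0 ≤ c := by positivity
  have key : ∀ t : ℝ, 0 < t → t ≤ 1 → a ≤ t * c := by
    intro t ht ht1
    have hmem : (1 - t) • p + t • y ∈ C := hCconv hp hy (by linarith) ht.le (by ring)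
    have hgz : g ((1 - t) • p + t • y) ≤ (1 - t) * g p + t * g y :=
      hg.2 hp hy (by linarith) ht.le (by ring)
    have hmz := hmin _ hmem
    have hnorm : ‖x - ((1 - t) • p + t • y)‖ ^ 2
        = ‖x - p‖ ^ 2 - 2 * t * ⟪x - p, y - p⟫ + t ^ 2 * ‖y - p‖ ^ 2 := by
      have h1 : x - ((1 - t) • p + t • y) = (x - p) - t • (y - p) := by
        rw [smul_sub]; module
      rw [h1, @norm_sub_sq_real, real_inner_smul_right, norm_smul,
        Real.norm_eq_abs, abs_of_pos ht]
      ring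
    have hgl := mul_le_mul_of_nonneg_left hgz hlam.le
    have h2 : t * a ≤ t * (t * c) := by
      rw [ha, hc]
      nlinarith [hmz, hnorm, hgl]
    exact le_of_mul_le_mul_left h2 ht
  have ha0 : a ≤ 0 := by
    by_contra h
    push_neg at h
    have hca : 0 < c + a := by linarith
    have ht : 0 < a / (c + a) := div_pos h hca
    have ht1 : a / (c + a) ≤ 1 := by rw [div_le_one hca]; linarith
    have hkey := key _ ht ht1
    rw [div_mul_eq_mul_div, le_div_iff₀ hca] at hkey
    nlinarith [mul_pos h h]
  linarith [ha0]

/-- Key estimate for the extragradient-type iteration: if `y_{n+1}` minimizes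
`y ↦ λ f(y_n, y) + (1/2)‖x_n - y‖²` over `C` and `y_n` minimizes
`y ↦ λ f(y_{n-1}, y) + (1/2)‖x_{n-1} - y‖²` over `C`, then for every solution `x*`
of the equilibrium problem,
`‖y_{n+1} - x*‖² ≤ ‖x_n - x*‖² + k‖x_n - x_{n-1}‖² + 2λc₁‖y_{n-1} - y_n‖²
  - (1 - 1/k - 2λc₂)‖y_n - y_{n+1}‖²`. -/
theorem extragradient_key_estimate
    {H : Type*} [NormedAddCommGroup H] [InnerProductSpace ℝ H]
    (C : Set H) (hCne : C.Nonempty) (hCclosed : IsClosed C) (hCconv : Convex ℝ C)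
    (f : H → H → ℝ) (c1 c2 : ℝ) (hc1 : 0 < c1) (hc2 : 0 < c2)
    (hrefl : ∀ x ∈ C, f x x = 0)
    (hmono : ∀ x ∈ C, ∀ y ∈ C, f x y + f y x ≤ 0)
    (hlip : ∀ x ∈ C, ∀ y ∈ C, ∀ z ∈ C,
      f x y + f y z ≥ f x z - c1 * ‖x - y‖ ^ 2 - c2 * ‖y - z‖ ^ 2)
    (hconv : ∀ x ∈ C, ConvexOn ℝ C (f x))
    (hsub : ∀ x ∈ C, ∀ p ∈ C, ∃ w : H, ∀ y ∈ C, f x y - f x p ≥ ⟪w, y - p⟫)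
    (lam k : ℝ) (hlam : 0 < lam) (hk : 0 < k)
    (xm xn : H) (ym yn ynp : H) (hym : ym ∈ C) (hyn : yn ∈ C) (hynp : ynp ∈ C)
    (hynmin : ∀ y ∈ C, lam * f ym yn + (1 / 2) * ‖xm - yn‖ ^ 2 ≤
      lam * f ym y + (1 / 2) * ‖xm - y‖ ^ 2)
    (hynpmin : ∀ y ∈ C, lam * f yn ynp + (1 / 2) * ‖xn - ynp‖ ^ 2 ≤
      lam * f yn y + (1 / 2) * ‖xn - y‖ ^ 2)
    (xs : H) (hxsC : xs ∈ C) (hxsEP : ∀ y ∈ C, 0 ≤ f xs y) :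
    ‖ynp - xs‖ ^ 2 ≤ ‖xn - xs‖ ^ 2 + k * ‖xn - xm‖ ^ 2
      + 2 * lam * c1 * ‖ym - yn‖ ^ 2
      - (1 - 1 / k - 2 * lam * c2) * ‖yn - ynp‖ ^ 2 := by
  -- Variational inequality for the second minimization with y = xs
  have hA : ⟪xn - ynp, xs - ynp⟫ ≤ lam * (f yn xs - f yn ynp) :=
    min_variational_aux hCconv (f yn) (hconv yn hyn) lam hlam xn ynp hynp hynpmin hxsC
  -- Variational inequality for the first minimization with y = ynp
  have hB : ⟪xm - yn, ynp - yn⟫ ≤ lam * (f ym ynp - f ym yn) :=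
    min_variational_aux hCconv (f ym) (hconv ym hym) lam hlam xm yn hyn hynmin hynp
  -- f yn xs ≤ 0 via monotonicity and xs being a solution
  have hfnxs : f yn xs ≤ 0 := by
    have h1 := hmono xs hxsC yn hyn
    have h2 := hxsEP yn hyn
    linarith
  -- Lipschitz-type inequality at (ym, yn, ynp)
  have hL := hlip ym hym yn hyn ynp hynp
  -- Norm identities
  have id1 : 2 * ⟪xn - ynp, xs - ynp⟫
      = ‖xn - ynp‖ ^ 2 + ‖ynp - xs‖ ^ 2 - ‖xn - xs‖ ^ 2 := by
    have h : (xn - ynp) - (xs - ynp) = xn - xs := by abel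
    have := @norm_sub_sq_real _ _ _ (xn - ynp) (xs - ynp)
    rw [h] at this
    have hrev : ‖xs - ynp‖ = ‖ynp - xs‖ := norm_sub_rev _ _
    rw [hrev] at this
    linarith
  have id2 : ⟪xm - yn, ynp - yn⟫ = ⟪xm - xn, ynp - yn⟫ + ⟪xn - yn, ynp - yn⟫ := by
    have h : xm - yn = (xm - xn) + (xn - yn) := by abel
    rw [h, inner_add_left]
  have id3 : 2 * ⟪xn - yn, ynp - yn⟫
      = ‖xn - yn‖ ^ 2 + ‖yn - ynp‖ ^ 2 - ‖xn - ynp‖ ^ 2 := by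
    have h : (xn - yn) - (ynp - yn) = xn - ynp := by abel
    have := @norm_sub_sq_real _ _ _ (xn - yn) (ynp - yn)
    rw [h] at this
    have hrev : ‖ynp - yn‖ = ‖yn - ynp‖ := norm_sub_rev _ _
    rw [hrev] at this
    linarith
  -- Young-type inequality for the cross term
  have hcross : -2 * ⟪xm - xn, ynp - yn⟫
      ≤ k * ‖xn - xm‖ ^ 2 + (1 / k) * ‖yn - ynp‖ ^ 2 := by
    have h1 : -⟪xm - xn, ynp - yn⟫ ≤ ‖xm - xn‖ * ‖ynp - yn‖ := by
      have := abs_real_inner_le_norm (xm - xn) (ynp - yn)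
      have h2 := neg_abs_le ⟪xm - xn, ynp - yn⟫
      linarith
    have hrev1 : ‖xm - xn‖ = ‖xn - xm‖ := norm_sub_rev _ _
    have hrev2 : ‖ynp - yn‖ = ‖yn - ynp‖ := norm_sub_rev _ _
    rw [hrev1, hrev2] at h1
    have hsq : 0 ≤ (k * ‖xn - xm‖ - ‖yn - ynp‖) ^ 2 := sq_nonneg _
    have hk' : 0 < 1 / k := by positivity
    have : 2 * (‖xn - xm‖ * ‖yn - ynp‖)
        ≤ k * ‖xn - xm‖ ^ 2 + (1 / k) * ‖yn - ynp‖ ^ 2 := by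
      rw [ge_iff_le, ← sub_nonneg] at *
      have hkey : k * ‖xn - xm‖ ^ 2 + (1 / k) * ‖yn - ynp‖ ^ 2
          - 2 * (‖xn - xm‖ * ‖yn - ynp‖)
          = (1 / k) * (k * ‖xn - xm‖ - ‖yn - ynp‖) ^ 2 := by
        field_simp
        ring
      rw [hkey]
      positivity
    nlinarith
  -- Multiply the Lipschitz inequality by lam
  have hLlam : lam * (f ym ynp - f ym yn)
      ≤ lam * (f yn ynp + c1 * ‖ym - yn‖ ^ 2 + c2 * ‖yn - ynp‖ ^ 2) := by
    apply mul_le_mul_of_nonneg_left _ hlam.le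
    linarith [hL]
  have hflam : lam * f yn xs ≤ 0 := mul_nonpos_of_nonneg_of_nonpos hlam.le hfnxs
  nlinarith [hA, hB, hLlam, hflam, id1, id2, id3, hcross, sq_nonneg ‖xn - yn‖,
    mul_le_mul_of_nonneg_left hfnxs hlam.le]
end

section
/- Let H be a real Hilbert space, C a nonempty closed convex subset of H, and S : C → C a nonexpansive mapping. Let f : C × C → ℝ satisfy: f(x, x) = 0 and f(x, y) + f(y, x) ≤ 0 for all x, y ∈ C; f is Lipschitz-type continuous on C with constants c₁, c₂ > 0; and f(x, ·) is convex and subdifferentiable on C for every x ∈ C. Let λ > 0, k > 0, α_n ∈ [0, 1]. Let x_{n−1}, x_n ∈ H, y_{n−1}, y_n ∈ C with y_n a minimizer over C of y ↦ λ f(y_{n−1}, y) + (1/2)‖x_{n−1} − y‖²; let y_{n+1} ∈ C be a minimizer over C of y ↦ λ f(y_n, y) + (1/2)‖x_n − y‖²; set z_{n+1} = α_n y_{n+1} + (1 − α_n) S y_{n+1}; set ε_n = k‖x_n − x_{n−1}‖² + 2λc₁‖y_n − y_{n−1}‖² − (1 − 1/k − 2λc₂)‖y_{n+1} − y_n‖²;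 let w_{n+1} = y_{n+1} if ‖y_{n+1} − x_n‖ ≥ ‖z_{n+1} − x_n‖ and w_{n+1} = z_{n+1} otherwise. Then for every x* ∈ C with f(x*, y) ≥ 0 for all y ∈ C and S x* = x*, one has ‖w_{n+1} − x*‖² ≤ ‖x_n − x*‖² + ε_n. -/
open scoped RealInnerProductSpace
open Filter Topology

/-!
Both minimizers satisfy the variational inequality `⟪x - p, y - p⟫ ≤ λ (f(u, y) - f(u, p))` of a
proximal step. Testing the one for `y_{n+1}` at `x*`, where `f(y_n, x*) ≤ 0` by monotonicity,
bounds `‖y_{n+1} - x*‖²` by `‖x_n - x*‖² - ‖x_n - y_{n+1}‖² - 2λ f(y_n, y_{n+1})`. Testing the one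
for `y_n` at `y_{n+1}` and applying the Lipschitz-type condition to `(y_{n-1}, y_n, y_{n+1})`
controls `-λ f(y_n, y_{n+1})`, up to the cross term `⟪x_{n-1} - x_n, y_n - y_{n+1}⟫`, which Young's
inequality with weight `k` splits. Since `S` is nonexpansive and fixes `x*`, the point `z_{n+1}`
is no farther from `x*` than `y_{n+1}`, so either choice of `w_{n+1}` obeys the bound.
-/

theorem le_of_forall_le_add_mul {a b c : ℝ} (h : ∀ t : ℝ, 0 < t → t ≤ 1 → a ≤ b + t * c) :
    a ≤ b := by
  have hlim : Tendsto (fun t : ℝ => b + t * c) (𝓝[>] 0) (𝓝 b) := by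
    have hcont : Continuous fun t : ℝ => b + t * c := by fun_prop
    exact (hcont.tendsto' 0 b (by simp)).mono_left nhdsWithin_le_nhds
  refine ge_of_tendsto hlim ?_
  filter_upwards [Ioo_mem_nhdsGT one_pos] with t ht using h t ht.1 ht.2.le

section InnerProductSpace

variable {H : Type*} [NormedAddCommGroup H] [InnerProductSpace ℝ H]

theorem two_mul_inner_le_mul_norm_sq_add {k : ℝ} (hk : 0 < k) (u v : H) :
    2 * ⟪u, v⟫ ≤ k * ‖u‖ ^ 2 + 1 / k * ‖v‖ ^ 2 := by
  have hexpand := norm_sub_sq_real (k • u) v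
  rw [real_inner_smul_left, norm_smul, Real.norm_of_nonneg hk.le] at hexpand
  have hsq : 0 ≤ ‖k • u - v‖ ^ 2 := sq_nonneg _
  rw [← mul_le_mul_iff_of_pos_left hk]
  field_simp
  linarith

theorem norm_smul_add_one_sub_smul_sub_le {α : ℝ} (hα : α ∈ Set.Icc (0 : ℝ) 1) {y z p : H}
    (hz : ‖z - p‖ ≤ ‖y - p‖) : ‖α • y + (1 - α) • z - p‖ ≤ ‖y - p‖ := by
  simp only [← mem_closedBall_iff_norm] at hz ⊢
  exact convex_closedBall p ‖y - p‖ (mem_closedBall_iff_norm.2 le_rfl) hz hα.1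
    (sub_nonneg.2 hα.2) (by ring)

theorem ConvexOn.inner_sub_le_of_forall_le_add_half_norm_sq {C : Set H} {g : H → ℝ}
    (hg : ConvexOn ℝ C g) {x p : H} (hp : p ∈ C)
    (hmin : ∀ y ∈ C, g p + (1 / 2) * ‖x - p‖ ^ 2 ≤ g y + (1 / 2) * ‖x - y‖ ^ 2)
    {y : H} (hy : y ∈ C) : ⟪x - p, y - p⟫ ≤ g y - g p := by
  refine le_of_forall_le_add_mul (c := ‖y - p‖ ^ 2 / 2) fun t ht0 ht1 => ?_
  have hseg : (1 - t) • p + t • y = p + t • (y - p) := by module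
  have hmem : p + t • (y - p) ∈ C := hseg ▸ hg.1 hp hy (by linarith) ht0.le (by ring)
  have hgseg : g (p + t • (y - p)) ≤ (1 - t) * g p + t * g y :=
    hseg ▸ hg.2 hp hy (by linarith) ht0.le (by ring)
  have hnorm : ‖x - (p + t • (y - p))‖ ^ 2
      = ‖x - p‖ ^ 2 - 2 * t * ⟪x - p, y - p⟫ + t ^ 2 * ‖y - p‖ ^ 2 := by
    rw [show x - (p + t • (y - p)) = (x - p) - t • (y - p) by abel, norm_sub_sq_real,
      real_inner_smul_right, norm_smul, Real.norm_of_nonneg ht0.le]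
    ring
  have hstep := hmin _ hmem
  rw [hnorm] at hstep
  have hscaled : t * ⟪x - p, y - p⟫ ≤ t * (g y - g p + t * (‖y - p‖ ^ 2 / 2)) := by linarith
  exact le_of_mul_le_mul_left hscaled ht0

theorem norm_sub_sq_le_of_proximal_steps {C : Set H} {f : H → H → ℝ} {c1 c2 lam k : ℝ}
    (hlam : 0 < lam) (hk : 0 < k) {xm xn ym yn ynp xs : H}
    (hconv_ym : ConvexOn ℝ C (f ym)) (hconv_yn : ConvexOn ℝ C (f yn))
    (hyn : yn ∈ C) (hynp : ynp ∈ C) (hxs : xs ∈ C)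
    (hynmin : ∀ y ∈ C, lam * f ym yn + (1 / 2) * ‖xm - yn‖ ^ 2 ≤
      lam * f ym y + (1 / 2) * ‖xm - y‖ ^ 2)
    (hynpmin : ∀ y ∈ C, lam * f yn ynp + (1 / 2) * ‖xn - ynp‖ ^ 2 ≤
      lam * f yn y + (1 / 2) * ‖xn - y‖ ^ 2)
    (hlip : f ym yn + f yn ynp ≥ f ym ynp - c1 * ‖ym - yn‖ ^ 2 - c2 * ‖yn - ynp‖ ^ 2)
    (hyn_xs : f yn xs ≤ 0) :
    ‖ynp - xs‖ ^ 2 ≤ ‖xn - xs‖ ^ 2 + (k * ‖xn - xm‖ ^ 2 + 2 * lam * c1 * ‖yn - ym‖ ^ 2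
      - (1 - 1 / k - 2 * lam * c2) * ‖ynp - yn‖ ^ 2) := by
  have hvi_xs : ⟪xn - ynp, xs - ynp⟫ ≤ lam * f yn xs - lam * f yn ynp :=
    (hconv_yn.smul hlam.le).inner_sub_le_of_forall_le_add_half_norm_sq hynp hynpmin hxs
  have hvi_ynp : ⟪xm - yn, ynp - yn⟫ ≤ lam * f ym ynp - lam * f ym yn :=
    (hconv_ym.smul hlam.le).inner_sub_le_of_forall_le_add_half_norm_sq hyn hynmin hynp
  have hlip' := mul_le_mul_of_nonneg_left (sub_nonneg.2 hlip) hlam.le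
  have hlam_xs : lam * f yn xs ≤ 0 := mul_nonpos_of_nonneg_of_nonpos hlam.le hyn_xs
  have hyoung := two_mul_inner_le_mul_norm_sq_add hk (xm - xn) (yn - ynp)
  have hxs_id : ‖xn - xs‖ ^ 2 = ‖xn - ynp‖ ^ 2 - 2 * ⟪xn - ynp, xs - ynp⟫ + ‖ynp - xs‖ ^ 2 := by
    rw [norm_sub_rev ynp xs, ← norm_sub_sq_real, sub_sub_sub_cancel_right]
  have hynp_id : ‖xn - ynp‖ ^ 2 = ‖xn - yn‖ ^ 2 + 2 * ⟪xn - yn, yn - ynp⟫ + ‖yn - ynp‖ ^ 2 := by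
    rw [← norm_add_sq_real, sub_add_sub_cancel]
  have hinner_id : ⟪xm - yn, ynp - yn⟫ + ⟪xm - xn, yn - ynp⟫ + ⟪xn - yn, yn - ynp⟫ = 0 := by
    simp only [inner_sub_left, inner_sub_right]
    ring
  rw [norm_sub_rev xn xm, norm_sub_rev yn ym, norm_sub_rev ynp yn]
  linarith [sq_nonneg ‖xn - yn‖]

end InnerProductSpace

theorem hybrid_key_estimate_general
    {H : Type*} [NormedAddCommGroup H] [InnerProductSpace ℝ H]
    (C : Set H)
    (S : H → H)
    (hS : ∀ x ∈ C, ∀ y ∈ C, ‖S x - S y‖ ≤ ‖x - y‖)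
    (f : H → H → ℝ) (c1 c2 : ℝ)
    (hmono : ∀ x ∈ C, ∀ y ∈ C, f x y + f y x ≤ 0)
    (hlip : ∀ x ∈ C, ∀ y ∈ C, ∀ z ∈ C,
      f x y + f y z ≥ f x z - c1 * ‖x - y‖ ^ 2 - c2 * ‖y - z‖ ^ 2)
    (hconv : ∀ x ∈ C, ConvexOn ℝ C (f x))
    (lam k : ℝ) (hlam : 0 < lam) (hk : 0 < k)
    (αn : ℝ) (hαn : αn ∈ Set.Icc (0 : ℝ) 1)
    (xm xn : H) (ym yn ynp : H) (hym : ym ∈ C) (hyn : yn ∈ C) (hynp : ynp ∈ C)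
    (hynmin : ∀ y ∈ C, lam * f ym yn + (1 / 2) * ‖xm - yn‖ ^ 2 ≤
      lam * f ym y + (1 / 2) * ‖xm - y‖ ^ 2)
    (hynpmin : ∀ y ∈ C, lam * f yn ynp + (1 / 2) * ‖xn - ynp‖ ^ 2 ≤
      lam * f yn y + (1 / 2) * ‖xn - y‖ ^ 2)
    (znp : H) (hznp : znp = αn • ynp + (1 - αn) • S ynp)
    (εn : ℝ) (hεn : εn = k * ‖xn - xm‖ ^ 2 + 2 * lam * c1 * ‖yn - ym‖ ^ 2
      - (1 - 1 / k - 2 * lam * c2) * ‖ynp - yn‖ ^ 2)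
    (wnp : H)
    (hw1 : ‖ynp - xn‖ ≥ ‖znp - xn‖ → wnp = ynp)
    (hw2 : ‖ynp - xn‖ < ‖znp - xn‖ → wnp = znp)
    (xs : H) (hxsC : xs ∈ C) (hxsEP : ∀ y ∈ C, 0 ≤ f xs y) (hxsF : S xs = xs) :
    ‖wnp - xs‖ ^ 2 ≤ ‖xn - xs‖ ^ 2 + εn := by
  have hyn_xs : f yn xs ≤ 0 := by linarith [hmono xs hxsC yn hyn, hxsEP yn hyn]
  have hynp_le : ‖ynp - xs‖ ^ 2 ≤ ‖xn - xs‖ ^ 2 + εn := hεn ▸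
    norm_sub_sq_le_of_proximal_steps hlam hk (hconv ym hym) (hconv yn hyn) hyn hynp hxsC
      hynmin hynpmin (hlip ym hym yn hyn ynp hynp) hyn_xs
  have hznp_le : ‖znp - xs‖ ≤ ‖ynp - xs‖ :=
    hznp ▸ norm_smul_add_one_sub_smul_sub_le hαn (by simpa only [hxsF] using hS ynp hynp xs hxsC)
  rcases le_or_gt ‖znp - xn‖ ‖ynp - xn‖ with hfar | hnear
  · rw [hw1 hfar]
    exact hynp_le
  · rw [hw2 hnear]
    exact (pow_le_pow_left₀ (norm_nonneg _) hznp_le 2).trans hynp_le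

/-- Main estimate (Lemma 3.2): with `z_{n+1} = α_n y_{n+1} + (1-α_n) S y_{n+1}`,
`ε_n = k‖x_n - x_{n-1}‖² + 2λc₁‖y_n - y_{n-1}‖² - (1 - 1/k - 2λc₂)‖y_{n+1} - y_n‖²`
and `w_{n+1}` the farther of `y_{n+1}, z_{n+1}` from `x_n`, one has
`‖w_{n+1} - x*‖² ≤ ‖x_n - x*‖² + ε_n` for every `x* ∈ EP(f,C) ∩ F(S)`. -/
theorem hybrid_key_estimate
    {H : Type*} [NormedAddCommGroup H] [InnerProductSpace ℝ H]
    (C : Set H) (hCne : C.Nonempty) (hCclosed : IsClosed C) (hCconv : Convex ℝ C)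
    (S : H → H) (hSC : ∀ x ∈ C, S x ∈ C)
    (hS : ∀ x ∈ C, ∀ y ∈ C, ‖S x - S y‖ ≤ ‖x - y‖)
    (f : H → H → ℝ) (c1 c2 : ℝ) (hc1 : 0 < c1) (hc2 : 0 < c2)
    (hrefl : ∀ x ∈ C, f x x = 0)
    (hmono : ∀ x ∈ C, ∀ y ∈ C, f x y + f y x ≤ 0)
    (hlip : ∀ x ∈ C, ∀ y ∈ C, ∀ z ∈ C,
      f x y + f y z ≥ f x z - c1 * ‖x - y‖ ^ 2 - c2 * ‖y - z‖ ^ 2)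
    (hconv : ∀ x ∈ C, ConvexOn ℝ C (f x))
    (hsub : ∀ x ∈ C, ∀ p ∈ C, ∃ w : H, ∀ y ∈ C, f x y - f x p ≥ ⟪w, y - p⟫)
    (lam k : ℝ) (hlam : 0 < lam) (hk : 0 < k)
    (αn : ℝ) (hαn : αn ∈ Set.Icc (0 : ℝ) 1)
    (xm xn : H) (ym yn ynp : H) (hym : ym ∈ C) (hyn : yn ∈ C) (hynp : ynp ∈ C)
    (hynmin : ∀ y ∈ C, lam * f ym yn + (1 / 2) * ‖xm - yn‖ ^ 2 ≤
      lam * f ym y + (1 / 2) * ‖xm - y‖ ^ 2)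
    (hynpmin : ∀ y ∈ C, lam * f yn ynp + (1 / 2) * ‖xn - ynp‖ ^ 2 ≤
      lam * f yn y + (1 / 2) * ‖xn - y‖ ^ 2)
    (znp : H) (hznp : znp = αn • ynp + (1 - αn) • S ynp)
    (εn : ℝ) (hεn : εn = k * ‖xn - xm‖ ^ 2 + 2 * lam * c1 * ‖yn - ym‖ ^ 2
      - (1 - 1 / k - 2 * lam * c2) * ‖ynp - yn‖ ^ 2)
    (wnp : H)
    (hw1 : ‖ynp - xn‖ ≥ ‖znp - xn‖ → wnp = ynp)
    (hw2 : ‖ynp - xn‖ < ‖znp - xn‖ → wnp = znp)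
    (xs : H) (hxsC : xs ∈ C) (hxsEP : ∀ y ∈ C, 0 ≤ f xs y) (hxsF : S xs = xs) :
    ‖wnp - xs‖ ^ 2 ≤ ‖xn - xs‖ ^ 2 + εn :=
  hybrid_key_estimate_general C S hS f c1 c2 hmono hlip hconv lam k hlam hk αn hαn xm xn ym yn ynp
    hym hyn hynp hynmin hynpmin znp hznp εn hεn wnp hw1 hw2 xs hxsC hxsEP hxsF
end

section
/- Let H be a real Hilbert space. Let x₀ ∈ H and let {x_n}_{n≥1} be a sequence in H with x₁ = x₀, such that for every n ≥ 1: ⟨x₀ − x_n, x_{n+1} − x_n⟩ ≤ 0, and there exists a fixed point x† ∈ H with ⟨x₀ − x_n, x† − x_n⟩ ≤ 0 for all n ≥ 1. Then: (i) ‖x_n − x†‖² ≤ ‖x† − x₀‖² − ‖x_n − x₀‖² for all n ≥ 1, so {x_n} is bounded; (ii) the sequence {‖x_n − x₀‖} is nondecreasing and convergent; (iii) Σ_{n=1}^∞ ‖x_{n+1} − x_n‖² < ∞, and in particular ‖x_{n+1} − x_n‖ → 0 as n → ∞. -/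
open scoped RealInnerProductSpace
open Filter

lemma halfspace_pythagoras {H : Type*} [NormedAddCommGroup H] [InnerProductSpace ℝ H]
    (a b z : H) (h : ⟪a - b, z - b⟫ ≤ 0) :
    ‖b - a‖ ^ 2 + ‖z - b‖ ^ 2 ≤ ‖z - a‖ ^ 2 := by
  have key : z - a = (z - b) + (b - a) := by abel
  have h2 : ⟪z - b, b - a⟫ = -⟪a - b, z - b⟫ := by
    rw [real_inner_comm]
    simp [inner_sub_left, inner_sub_right]
    ring
  have := norm_add_sq_real (z - b) (b - a)
  rw [← key] at this
  nlinarith [this]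

/-- Properties of a sequence of projections onto the halfspaces
`Q_n = {z | ⟪x₀ - x_n, z - x_n⟫ ≤ 0}` containing `x_{n+1}` and a fixed point `x†`:
(i) `‖x_n - x†‖² ≤ ‖x† - x₀‖² - ‖x_n - x₀‖²`, hence `{x_n}` is bounded;
(ii) `{‖x_n - x₀‖}` is nondecreasing and convergent;
(iii) `Σ ‖x_{n+1} - x_n‖² < ∞`, so `‖x_{n+1} - x_n‖ → 0`. -/
theorem projection_sequence_properties
    {H : Type*} [NormedAddCommGroup H] [InnerProductSpace ℝ H]
    (x : ℕ → H) (hx1 : x 1 = x 0)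
    (hQ : ∀ n ≥ 1, ⟪x 0 - x n, x (n + 1) - x n⟫ ≤ 0)
    (xd : H) (hxd : ∀ n ≥ 1, ⟪x 0 - x n, xd - x n⟫ ≤ 0) :
    (∀ n ≥ 1, ‖x n - xd‖ ^ 2 ≤ ‖xd - x 0‖ ^ 2 - ‖x n - x 0‖ ^ 2) ∧
    Bornology.IsBounded (Set.range x) ∧
    (∀ n ≥ 1, ‖x n - x 0‖ ≤ ‖x (n + 1) - x 0‖) ∧
    (∃ l : ℝ, Tendsto (fun n => ‖x n - x 0‖) atTop (nhds l)) ∧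
    Summable (fun n => ‖x (n + 1) - x n‖ ^ 2) ∧
    Tendsto (fun n => ‖x (n + 1) - x n‖) atTop (nhds 0) := by
  -- (i)
  have hi : ∀ n ≥ 1, ‖x n - xd‖ ^ 2 ≤ ‖xd - x 0‖ ^ 2 - ‖x n - x 0‖ ^ 2 := by
    intro n hn
    have := halfspace_pythagoras (x 0) (x n) xd (hxd n hn)
    rw [norm_sub_rev (x n) xd]
    linarith
  -- bound on ‖x n - x 0‖
  have hb : ∀ n, ‖x n - x 0‖ ≤ ‖xd - x 0‖ := by
    intro n
    rcases Nat.eq_zero_or_pos n with h0 | h1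
    · subst h0; simp
    · have := hi n h1
      have h2 : ‖x n - x 0‖ ^ 2 ≤ ‖xd - x 0‖ ^ 2 := by
        nlinarith [sq_nonneg ‖x n - xd‖]
      nlinarith [norm_nonneg (x n - x 0), norm_nonneg (xd - x 0)]
  have hbd : Bornology.IsBounded (Set.range x) := by
    apply Bornology.IsBounded.subset (Metric.isBounded_closedBall (x := x 0) (r := ‖xd - x 0‖))
    rintro _ ⟨n, rfl⟩
    simpa [Metric.mem_closedBall, dist_eq_norm] using hb n
  -- pythagoras for the step
  have hstep : ∀ n ≥ 1, ‖x n - x 0‖ ^ 2 + ‖x (n + 1) - x n‖ ^ 2 ≤ ‖x (n + 1) - x 0‖ ^ 2 := by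
    intro n hn
    have := halfspace_pythagoras (x 0) (x n) (x (n + 1)) (hQ n hn)
    linarith
  -- (ii) monotone
  have hmono : ∀ n ≥ 1, ‖x n - x 0‖ ≤ ‖x (n + 1) - x 0‖ := by
    intro n hn
    have := hstep n hn
    nlinarith [sq_nonneg ‖x (n + 1) - x n‖, norm_nonneg (x n - x 0),
      norm_nonneg (x (n + 1) - x 0)]
  have hmono' : Monotone (fun n => ‖x n - x 0‖) := by
    apply monotone_nat_of_le_succ
    intro n
    rcases Nat.eq_zero_or_pos n with h0 | h1
    · subst h0; simp
    · exact hmono n h1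
  have hlim : ∃ l : ℝ, Tendsto (fun n => ‖x n - x 0‖) atTop (nhds l) := by
    refine ⟨_, tendsto_atTop_ciSup hmono' ⟨‖xd - x 0‖, ?_⟩⟩
    rintro _ ⟨n, rfl⟩
    exact hb n
  -- (iii)
  have hterm : ∀ n, ‖x (n + 1) - x n‖ ^ 2 ≤ ‖x (n + 1) - x 0‖ ^ 2 - ‖x n - x 0‖ ^ 2 := by
    intro n
    rcases Nat.eq_zero_or_pos n with h0 | h1
    · subst h0; simp [hx1]
    · have := hstep n h1; linarith
  have hsum : Summable (fun n => ‖x (n + 1) - x n‖ ^ 2) := by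
    apply summable_of_sum_range_le (c := ‖xd - x 0‖ ^ 2) (fun n => sq_nonneg _)
    intro n
    have htel : ∀ m, ∑ i ∈ Finset.range m, ‖x (i + 1) - x i‖ ^ 2 ≤ ‖x m - x 0‖ ^ 2 := by
      intro m
      induction m with
      | zero => simp
      | succ k ih =>
        rw [Finset.sum_range_succ]
        have := hterm k
        linarith
    calc ∑ i ∈ Finset.range n, ‖x (i + 1) - x i‖ ^ 2 ≤ ‖x n - x 0‖ ^ 2 := htel n
      _ ≤ ‖xd - x 0‖ ^ 2 := by nlinarith [hb n, norm_nonneg (x n - x 0)]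
  have hsq0 : Tendsto (fun n => ‖x (n + 1) - x n‖ ^ 2) atTop (nhds 0) := hsum.tendsto_atTop_zero
  have h0 : Tendsto (fun n => ‖x (n + 1) - x n‖) atTop (nhds 0) := by
    have h := (Real.continuous_sqrt.tendsto 0).comp hsq0
    rw [Real.sqrt_zero] at h
    exact h.congr (fun n => by simp [Function.comp, Real.sqrt_sq (norm_nonneg _)])
  exact ⟨hi, hbd, hmono, hlim, hsum, h0⟩
end
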